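/- arXiv:1912.02626 — 8 statements merged into one kernel-verified Lean document; each statement's English description precedes it below -/
import Mathlib

section
/- Let X and Y be Banach spaces and let Γ be a closed linear subspace of X × Y whose domain is all of X, i.e. for every x ∈ X there exists y ∈ Y with (x, y) ∈ Γ. Then for every open set B ⊆ Y, the set ΓB = {x ∈ X : ∃ b ∈ B, (x, b) ∈ Γ} is open in X. -/
/-- Relational closed graph theorem: if `Γ` is a closed linear subspace of `X × Y`
whose domain is all of `X`, then for every open `B ⊆ Y` the set
`ΓB = {x | ∃ b ∈ B, (x, b) ∈ Γ}` is open. -/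
theorem relational_closed_graph_theorem
    {X Y : Type*} [NormedAddCommGroup X] [NormedSpace ℝ X] [CompleteSpace X]
    [NormedAddCommGroup Y] [NormedSpace ℝ Y] [CompleteSpace Y]
    (Γ : Submodule ℝ (X × Y)) (hΓ : IsClosed (Γ : Set (X × Y)))
    (hdom : ∀ x : X, ∃ y : Y, (x, y) ∈ Γ)
    (B : Set Y) (hB : IsOpen B) :
    IsOpen {x : X | ∃ b ∈ B, (x, b) ∈ Γ} := by
  haveI : CompleteSpace Γ := hΓ.completeSpace_coe
  let f : Γ →L[ℝ] X := (ContinuousLinearMap.fst ℝ X Y).comp Γ.subtypeL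
  have hsurj : Function.Surjective f := by
    intro x
    obtain ⟨y, hy⟩ := hdom x
    exact ⟨⟨(x, y), hy⟩, rfl⟩
  have hopen : IsOpenMap f := f.isOpenMap hsurj
  have hU : IsOpen {g : Γ | (g : X × Y).2 ∈ B} :=
    hB.preimage (continuous_snd.comp continuous_subtype_val)
  have himg : f '' {g : Γ | (g : X × Y).2 ∈ B} = {x : X | ∃ b ∈ B, (x, b) ∈ Γ} := by
    ext x
    constructor
    · rintro ⟨⟨⟨a, b⟩, hab⟩, hb, rfl⟩
      exact ⟨b, hb, hab⟩
    · rintro ⟨b, hb, hab⟩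
      exact ⟨⟨(x, b), hab⟩, hb, rfl⟩
  exact himg ▸ hopen _ hU
end

section
/- Let X and Y be Banach spaces and let Γ be a closed linear subspace of X × Y whose range is all of Y, i.e. for every y ∈ Y there exists x ∈ X with (x, y) ∈ Γ. Then for every open set A ⊆ X, the set AΓ = {y ∈ Y : ∃ a ∈ A, (a, y) ∈ Γ} is open in Y. -/
/-- Relational open mapping theorem: if `Γ` is a closed linear subspace of `X × Y`
whose range is all of `Y`, then for every open `A ⊆ X` the set
`AΓ = {y | ∃ a ∈ A, (a, y) ∈ Γ}` is open. -/
theorem relational_open_mapping_theorem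
    {X Y : Type*} [NormedAddCommGroup X] [NormedSpace ℝ X] [CompleteSpace X]
    [NormedAddCommGroup Y] [NormedSpace ℝ Y] [CompleteSpace Y]
    (Γ : Submodule ℝ (X × Y)) (hΓ : IsClosed (Γ : Set (X × Y)))
    (hran : ∀ y : Y, ∃ x : X, (x, y) ∈ Γ)
    (A : Set X) (hA : IsOpen A) :
    IsOpen {y : Y | ∃ a ∈ A, (a, y) ∈ Γ} := by
  haveI : CompleteSpace Γ := hΓ.completeSpace_coe
  set f : Γ →L[ℝ] Y := (ContinuousLinearMap.snd ℝ X Y).comp Γ.subtypeL with hf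
  have hsurj : Function.Surjective f := by
    intro y
    obtain ⟨x, hx⟩ := hran y
    exact ⟨⟨(x, y), hx⟩, rfl⟩
  have hopen : IsOpenMap f := f.isOpenMap hsurj
  have hU : IsOpen {g : Γ | (g : X × Y).1 ∈ A} :=
    hA.preimage (continuous_fst.comp continuous_subtype_val)
  have heq : {y : Y | ∃ a ∈ A, (a, y) ∈ Γ} = f '' {g : Γ | (g : X × Y).1 ∈ A} := by
    ext y
    constructor
    · rintro ⟨a, ha, hmem⟩
      exact ⟨⟨(a, y), hmem⟩, ha, rfl⟩
    · rintro ⟨⟨⟨a, b⟩, hmem⟩, ha, rfl⟩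
      exact ⟨a, ha, hmem⟩
  rw [heq]
  exact hopen _ hU
end

section
/- Let X, Z, Y be Banach spaces and let Γ be a closed linear subspace of X × Z × Y such that the projection X × Z × Y → X × Y, (x, z, y) ↦ (x, y), is surjective when restricted to Γ. Then for every open set W ⊆ Z, the set ΓWΓ = {(x, y) ∈ X × Y : ∃ w ∈ W, (x, w, y) ∈ Γ} is open in X × Y. -/
/-- Ternary relational theorem: if `Γ` is a closed linear subspace of `X × Z × Y`
on which the projection `(x, z, y) ↦ (x, y)` is surjective, then for every open
`W ⊆ Z` the set `ΓWΓ = {(x, y) | ∃ w ∈ W, (x, w, y) ∈ Γ}` is open in `X × Y`. -/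
theorem ternary_relational_theorem
    {X Z Y : Type*} [NormedAddCommGroup X] [NormedSpace ℝ X] [CompleteSpace X]
    [NormedAddCommGroup Z] [NormedSpace ℝ Z] [CompleteSpace Z]
    [NormedAddCommGroup Y] [NormedSpace ℝ Y] [CompleteSpace Y]
    (Γ : Submodule ℝ (X × Z × Y)) (hΓ : IsClosed (Γ : Set (X × Z × Y)))
    (hsurj : ∀ x : X, ∀ y : Y, ∃ z : Z, (x, z, y) ∈ Γ)
    (W : Set Z) (hW : IsOpen W) :
    IsOpen {q : X × Y | ∃ w ∈ W, (q.1, w, q.2) ∈ Γ} := by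
  haveI : CompleteSpace Γ := hΓ.completeSpace_coe
  -- the projection X × Z × Y → X × Y
  let π : (X × Z × Y) →L[ℝ] X × Y :=
    (ContinuousLinearMap.fst ℝ X (Z × Y)).prod
      ((ContinuousLinearMap.snd ℝ Z Y).comp (ContinuousLinearMap.snd ℝ X (Z × Y)))
  -- restricted to Γ
  let f : Γ →L[ℝ] X × Y := π.comp (Γ.subtypeL)
  have hfsurj : Function.Surjective f := by
    rintro ⟨x, y⟩
    obtain ⟨z, hz⟩ := hsurj x y
    exact ⟨⟨(x, z, y), hz⟩, rfl⟩
  have hopen : IsOpenMap f := f.isOpenMap hfsurj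
  have : {q : X × Y | ∃ w ∈ W, (q.1, w, q.2) ∈ Γ} =
      f '' {p : Γ | (p : X × Z × Y).2.1 ∈ W} := by
    ext ⟨x, y⟩
    constructor
    · rintro ⟨w, hw, hmem⟩
      exact ⟨⟨(x, w, y), hmem⟩, hw, rfl⟩
    · rintro ⟨⟨⟨x', w, y'⟩, hmem⟩, hw, heq⟩
      have hx : x' = x := congrArg Prod.fst heq
      have hy : y' = y := congrArg Prod.snd heq
      subst hx; subst hy
      exact ⟨w, hw, hmem⟩
  rw [this]
  exact hopen _ (hW.preimage (continuous_subtype_val.snd.fst))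
end

section
/- Let Z be a Banach space and let p : Z → ℝ be a seminorm that is countably subadditive, meaning that p(∑ₙ zₙ) ≤ ∑ₙ p(zₙ) for every convergent series ∑ₙ zₙ in Z (the inequality being required whenever the right-hand series converges). Then p is continuous. -/
open Filter Topology

/-- Zabreiko's lemma: on a Banach space, every countably subadditive seminorm
is continuous. -/
theorem zabreiko_lemma
    {Z : Type*} [NormedAddCommGroup Z] [NormedSpace ℝ Z] [CompleteSpace Z]
    (p : Z → ℝ)
    (hnonneg : ∀ z : Z, 0 ≤ p z)
    (hsmul : ∀ (a : ℝ) (z : Z), p (a • z) = |a| * p z)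
    (hadd : ∀ z z' : Z, p (z + z') ≤ p z + p z')
    (hcsub : ∀ (z : ℕ → Z) (s : Z) (t : ℝ),
      Tendsto (fun n => ∑ i ∈ Finset.range n, z i) atTop (𝓝 s) →
      Tendsto (fun n => ∑ i ∈ Finset.range n, p (z i)) atTop (𝓝 t) →
      p s ≤ t) :
    Continuous p := by
  have hneg : ∀ z : Z, p (-z) = p z := by
    intro z
    have := hsmul (-1) z
    simpa using this
  -- Baire category: some closure {p ≤ n} has nonempty interior
  obtain ⟨n, x, hx⟩ :
      ∃ (n : ℕ) (x : Z), x ∈ interior (closure {z : Z | p z ≤ (n : ℝ)}) := by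
    obtain ⟨n, hn⟩ := nonempty_interior_of_iUnion_of_closed
      (f := fun n : ℕ => closure {z : Z | p z ≤ (n : ℝ)})
      (fun n => isClosed_closure) (by
        ext z
        simp only [Set.mem_iUnion, Set.mem_univ, iff_true]
        obtain ⟨n, hn⟩ := exists_nat_ge (p z)
        exact ⟨n, subset_closure hn⟩)
    exact ⟨n, hn⟩
  set S : Set Z := {z : Z | p z ≤ (n : ℝ)} with hS
  obtain ⟨ε, hε, hball⟩ := Metric.isOpen_iff.1 isOpen_interior x hx
  replace hball : Metric.ball x ε ⊆ closure S := hball.trans interior_subset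
  have hconv : Convex ℝ S := by
    intro a ha b hb s t hs ht hst
    have : p (s • a + t • b) ≤ s * p a + t * p b := by
      calc p (s • a + t • b) ≤ p (s • a) + p (t • b) := hadd _ _
        _ = |s| * p a + |t| * p b := by rw [hsmul, hsmul]
        _ = s * p a + t * p b := by rw [abs_of_nonneg hs, abs_of_nonneg ht]
    refine Set.mem_setOf_eq ▸ this.trans ?_
    calc s * p a + t * p b ≤ s * n + t * n := by
          exact add_le_add (mul_le_mul_of_nonneg_left ha hs)
            (mul_le_mul_of_nonneg_left hb ht)
      _ = (s + t) * n := by ring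
      _ = n := by rw [hst, one_mul]
  -- ball 0 ε ⊆ closure S
  have hball0 : ∀ y : Z, ‖y‖ < ε → y ∈ closure S := by
    intro y hy
    have h1 : x + y ∈ closure S := hball (by
      simpa [Metric.mem_ball, dist_eq_norm] using hy)
    have h2 : x - y ∈ closure S := hball (by
      simp only [Metric.mem_ball, dist_eq_norm]
      simpa [norm_sub_rev, sub_sub_cancel_left] using hy)
    have h2' : -(x - y) ∈ closure S :=
      map_mem_closure continuous_neg h2
        (fun a ha => by simpa [hS, hneg] using ha)
    have := hconv.closure h1 h2' (by norm_num : (0:ℝ) ≤ (1/2:ℝ))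
      (by norm_num : (0:ℝ) ≤ (1/2:ℝ)) (by norm_num)
    convert this using 1
    have : (1/2 : ℝ) • (x + y) + (1/2 : ℝ) • -(x - y) = y := by
      module
    exact this.symm
  -- key approximation step
  have key : ∀ (k : ℕ) (w : Z), ‖w‖ < ε / 2 ^ k →
      ∃ u : Z, p u ≤ n / 2 ^ k ∧ ‖w - u‖ < ε / 2 ^ (k + 1) := by
    intro k w hw
    have h2k : (0:ℝ) < 2 ^ k := by positivity
    have hmem : (2 : ℝ) ^ k • w ∈ closure S := by
      apply hball0
      rw [norm_smul]
      rw [Real.norm_eq_abs, abs_of_pos h2k]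
      calc (2:ℝ)^k * ‖w‖ < 2^k * (ε / 2^k) := by
            exact mul_lt_mul_of_pos_left hw h2k
        _ = ε := by field_simp
    obtain ⟨c, hc, hdist⟩ := Metric.mem_closure_iff.1 hmem (ε * 2 ^ k / 2 ^ (k+1))
      (by positivity)
    refine ⟨((2:ℝ) ^ k)⁻¹ • c, ?_, ?_⟩
    · rw [hsmul, abs_of_pos (by positivity : (0:ℝ) < ((2:ℝ)^k)⁻¹)]
      rw [inv_mul_le_iff₀ h2k]
      calc p c ≤ n := hc
        _ = 2^k * ((n:ℝ) / 2^k) := by field_simp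
    · have : w - ((2:ℝ)^k)⁻¹ • c = ((2:ℝ)^k)⁻¹ • ((2:ℝ)^k • w - c) := by
        rw [smul_sub, smul_smul, inv_mul_cancel₀ (ne_of_gt h2k), one_smul]
      rw [this, norm_smul, Real.norm_eq_abs, abs_of_pos (by positivity)]
      rw [dist_eq_norm] at hdist
      calc ((2:ℝ)^k)⁻¹ * ‖(2:ℝ)^k • w - c‖ < ((2:ℝ)^k)⁻¹ * (ε * 2^k / 2^(k+1)) := by
            exact mul_lt_mul_of_pos_left hdist (by positivity)
        _ = ε / 2^(k+1) := by rw [pow_succ]; field_simp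
  -- boundedness on the ball
  have bound : ∀ z : Z, ‖z‖ < ε → p z ≤ 2 * n := by
    intro z hz
    choose! u hu1 hu2 using key
    set w : ℕ → Z := fun k => Nat.rec z (fun k wk => wk - u k wk) k with hw
    have hwsucc : ∀ k, w (k + 1) = w k - u k (w k) := fun k => rfl
    have hwnorm : ∀ k, ‖w k‖ < ε / 2 ^ k := by
      intro k
      induction k with
      | zero => show ‖z‖ < ε / 2 ^ 0; simpa using hz
      | succ k ih =>
        rw [hwsucc]
        exact hu2 k (w k) ih
    set uu : ℕ → Z := fun k => u k (w k) with huu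
    have hpu : ∀ k, p (uu k) ≤ n / 2 ^ k := fun k => hu1 k (w k) (hwnorm k)
    have hpartial : ∀ k, ∑ i ∈ Finset.range k, uu i = z - w k := by
      intro k
      induction k with
      | zero => simp [hw]
      | succ k ih =>
        rw [Finset.sum_range_succ, ih, hwsucc]
        abel
    -- partial sums tend to z
    have htendsto : Tendsto (fun k => ∑ i ∈ Finset.range k, uu i) atTop (𝓝 z) := by
      have hw0 : Tendsto (fun k => ‖w k‖) atTop (𝓝 0) := by
        apply squeeze_zero (fun k => norm_nonneg _) (fun k => (hwnorm k).le)
        have : Tendsto (fun k : ℕ => ε * (1/2)^k) atTop (𝓝 (ε * 0)) :=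
          (tendsto_pow_atTop_nhds_zero_of_lt_one (by norm_num) (by norm_num)).const_mul ε
        simpa [div_eq_mul_inv, inv_pow] using this
      have : Tendsto (fun k => z - w k) atTop (𝓝 (z - 0)) := by
        apply Tendsto.const_sub
        exact tendsto_zero_iff_norm_tendsto_zero.2 hw0
      simp only [sub_zero] at this
      simpa [hpartial] using this
    -- summability of p ∘ uu
    have hsummable : Summable (fun k => p (uu k)) := by
      apply Summable.of_nonneg_of_le (fun k => hnonneg _) hpu
      have : Summable (fun k : ℕ => (n:ℝ) * (1/2)^k) := summable_geometric_two.mul_left _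
      simpa [div_eq_mul_inv, inv_pow] using this
    have htsum : Tendsto (fun k => ∑ i ∈ Finset.range k, p (uu i)) atTop
        (𝓝 (∑' k, p (uu k))) := hsummable.hasSum.tendsto_sum_nat
    have hle : p z ≤ ∑' k, p (uu k) := hcsub uu z _ htendsto htsum
    refine hle.trans ?_
    calc ∑' k, p (uu k) ≤ ∑' k : ℕ, (n:ℝ) / 2 ^ k := by
          apply Summable.tsum_le_tsum hpu hsummable
          have : Summable (fun k : ℕ => (n:ℝ) * (1/2)^k) := summable_geometric_two.mul_left _
          simpa [div_eq_mul_inv, inv_pow] using this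
      _ = 2 * n := by
          have : ∑' k : ℕ, (n:ℝ) / 2 ^ k = (n:ℝ) * ∑' k : ℕ, ((1:ℝ)/2) ^ k := by
            rw [← tsum_mul_left]
            congr 1
            ext k
            rw [div_eq_mul_inv, one_div, inv_pow]
          rw [this, tsum_geometric_two]
          ring
  -- Lipschitz bound
  have hlip : ∀ v : Z, p v ≤ (4 * n / ε) * ‖v‖ := by
    intro v
    rcases eq_or_ne v 0 with rfl | hv
    · have : p 0 = 0 := by have := hsmul 0 0; simpa using this
      simp [this]
    · have hnv : (0:ℝ) < ‖v‖ := norm_pos_iff.2 hv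
      set c : ℝ := ε / (2 * ‖v‖) with hc
      have hcpos : 0 < c := by positivity
      have hcv : ‖c • v‖ < ε := by
        rw [norm_smul, Real.norm_eq_abs, abs_of_pos hcpos, hc]
        rw [div_mul_eq_mul_div, mul_comm]
        rw [div_lt_iff₀ (by positivity)]
        nlinarith
      have := bound (c • v) hcv
      rw [hsmul, abs_of_pos hcpos] at this
      rw [hc, div_mul_eq_mul_div, div_le_iff₀ (by positivity : (0:ℝ) < 2 * ‖v‖)] at this
      rw [div_mul_eq_mul_div, le_div_iff₀ hε]
      nlinarith
  -- conclude continuity via Lipschitz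
  have hK : 0 ≤ 4 * (n:ℝ) / ε := by positivity
  apply LipschitzWith.continuous (K := Real.toNNReal (4 * n / ε))
  apply LipschitzWith.of_dist_le_mul
  intro a b
  rw [Real.dist_eq, Real.coe_toNNReal _ hK, dist_eq_norm]
  rw [abs_sub_le_iff]
  constructor
  · have h1 : p a ≤ p (a - b) + p b := by
      calc p a = p ((a - b) + b) := by rw [sub_add_cancel]
        _ ≤ p (a - b) + p b := hadd _ _
    linarith [hlip (a - b)]
  · have h1 : p b ≤ p (b - a) + p a := by
      calc p b = p ((b - a) + a) := by rw [sub_add_cancel]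
        _ ≤ p (b - a) + p a := hadd _ _
    have h2 : p (b - a) = p (a - b) := by rw [← hneg (a - b)]; congr 1; abel
    linarith [hlip (a - b)]
end

section
/- Let X and Y be Banach spaces and let Γ be a closed linear subspace of X × Y whose range is all of Y. Define p : Y → ℝ by p(y) = inf{‖x‖ : (x, y) ∈ Γ}. Then p is countably subadditive: for every sequence (yₙ) in Y such that the series ∑ₙ yₙ converges in Y and ∑ₙ p(yₙ) converges in ℝ, one has p(∑ₙ yₙ) ≤ ∑ₙ p(yₙ). -/
open Filter Topology

/-- For a closed linear relation `Γ ⊆ X × Y` with full range, the function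
`p(y) = inf {‖x‖ : (x, y) ∈ Γ}` is countably subadditive. -/
theorem relation_seminorm_countably_subadditive
    {X Y : Type*} [NormedAddCommGroup X] [NormedSpace ℝ X] [CompleteSpace X]
    [NormedAddCommGroup Y] [NormedSpace ℝ Y] [CompleteSpace Y]
    (Γ : Submodule ℝ (X × Y)) (hΓ : IsClosed (Γ : Set (X × Y)))
    (hran : ∀ y : Y, ∃ x : X, (x, y) ∈ Γ)
    (p : Y → ℝ) (hp : ∀ y : Y, p y = sInf {r : ℝ | ∃ x : X, (x, y) ∈ Γ ∧ ‖x‖ = r})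
    (y : ℕ → Y) (s : Y) (t : ℝ)
    (hs : Tendsto (fun n => ∑ i ∈ Finset.range n, y i) atTop (𝓝 s))
    (ht : Tendsto (fun n => ∑ i ∈ Finset.range n, p (y i)) atTop (𝓝 t)) :
    p s ≤ t := by
  have hbdd : ∀ z : Y, BddBelow {r : ℝ | ∃ x : X, (x, z) ∈ Γ ∧ ‖x‖ = r} := by
    intro z
    exact ⟨0, fun r ⟨x, _, hx⟩ => hx ▸ norm_nonneg x⟩
  have hne : ∀ z : Y, Set.Nonempty {r : ℝ | ∃ x : X, (x, z) ∈ Γ ∧ ‖x‖ = r} := by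
    intro z
    obtain ⟨x, hx⟩ := hran z
    exact ⟨‖x‖, x, hx, rfl⟩
  have hpnn : ∀ z : Y, 0 ≤ p z := by
    intro z
    rw [hp z]
    exact le_csInf (hne z) fun r ⟨x, _, hx⟩ => hx ▸ norm_nonneg x
  -- summability of p ∘ y
  have hsum : HasSum (fun n => p (y n)) t :=
    (hasSum_iff_tendsto_nat_of_nonneg (fun i => hpnn (y i)) t).mpr ht
  -- it suffices to show p s ≤ t + ε for all ε > 0
  refine le_of_forall_pos_le_add fun ε hε => ?_
  -- choose x n with (x n, y n) ∈ Γ and ‖x n‖ < p (y n) + (ε/2) * (1/2)^n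
  have hchoice : ∀ n : ℕ, ∃ x : X, (x, y n) ∈ Γ ∧ ‖x‖ < p (y n) + (ε / 2) * (1 / 2) ^ n := by
    intro n
    have hlt : sInf {r : ℝ | ∃ x : X, (x, y n) ∈ Γ ∧ ‖x‖ = r} <
        p (y n) + (ε / 2) * (1 / 2) ^ n := by
      rw [← hp (y n)]
      have : 0 < (ε / 2) * (1 / 2) ^ n := by positivity
      linarith
    obtain ⟨r, ⟨x, hxΓ, hxr⟩, hr⟩ := exists_lt_of_csInf_lt (hne (y n)) hlt
    exact ⟨x, hxΓ, hxr ▸ hr⟩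
  choose x hxΓ hxlt using hchoice
  -- bounding sequence
  set g : ℕ → ℝ := fun n => p (y n) + (ε / 2) * (1 / 2) ^ n with hg
  have hgsum : Summable g :=
    hsum.summable.add ((summable_geometric_of_lt_one (by norm_num) (by norm_num)).mul_left _)
  have hgt : ∑' n, g n = t + ε := by
    rw [Summable.tsum_add hsum.summable ((summable_geometric_of_lt_one (by norm_num) (by norm_num)).mul_left _),
      hsum.tsum_eq, tsum_mul_left, tsum_geometric_of_lt_one (by norm_num) (by norm_num)]
    norm_num
  have hnormsum : Summable fun n => ‖x n‖ :=
    Summable.of_nonneg_of_le (fun n => norm_nonneg _) (fun n => (hxlt n).le) hgsum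
  have hxsum : Summable x := hnormsum.of_norm
  -- the limit xlim
  obtain ⟨xlim, hxlim⟩ := hxsum
  have hxtend : Tendsto (fun n => ∑ i ∈ Finset.range n, x i) atTop (𝓝 xlim) :=
    hxlim.tendsto_sum_nat
  -- (xlim, s) ∈ Γ by closedness
  have hmem : (xlim, s) ∈ Γ := by
    have hmemn : ∀ n, ((∑ i ∈ Finset.range n, x i, ∑ i ∈ Finset.range n, y i) : X × Y) ∈ Γ := by
      intro n
      have : (∑ i ∈ Finset.range n, (x i, y i) : X × Y) ∈ Γ :=
        Submodule.sum_mem Γ fun i _ => hxΓ i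
      have heq : (∑ i ∈ Finset.range n, (x i, y i) : X × Y)
          = (∑ i ∈ Finset.range n, x i, ∑ i ∈ Finset.range n, y i) :=
        Prod.ext (by simp [Prod.fst_sum]) (by simp [Prod.snd_sum])
      rwa [heq] at this
    have htend : Tendsto (fun n => ((∑ i ∈ Finset.range n, x i, ∑ i ∈ Finset.range n, y i) : X × Y))
        atTop (𝓝 (xlim, s)) := hxtend.prodMk_nhds hs
    exact hΓ.mem_of_tendsto htend (Eventually.of_forall hmemn)
  -- conclude
  have h1 : p s ≤ ‖xlim‖ := by
    rw [hp s]
    exact csInf_le (hbdd s) ⟨xlim, hmem, rfl⟩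
  have h2 : ‖xlim‖ ≤ ∑' n, ‖x n‖ := by
    rw [← hxlim.tsum_eq]
    exact norm_tsum_le_tsum_norm hnormsum
  have h3 : ∑' n, ‖x n‖ ≤ ∑' n, g n :=
    Summable.tsum_le_tsum (fun n => (hxlt n).le) hnormsum hgsum
  linarith [hgt ▸ h3]
end

section
/- Let X and Y be Banach spaces and let Γ be a closed linear subspace of X × Y whose range is all of Y. Then the function p : Y → ℝ defined by p(y) = inf{‖x‖ : (x, y) ∈ Γ} is continuous on Y. -/
/-- For a closed linear relation `Γ ⊆ X × Y` with full range, the function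
`p(y) = inf {‖x‖ : (x, y) ∈ Γ}` is continuous on `Y`. -/
theorem relation_seminorm_continuous
    {X Y : Type*} [NormedAddCommGroup X] [NormedSpace ℝ X] [CompleteSpace X]
    [NormedAddCommGroup Y] [NormedSpace ℝ Y] [CompleteSpace Y]
    (Γ : Submodule ℝ (X × Y)) (hΓ : IsClosed (Γ : Set (X × Y)))
    (hran : ∀ y : Y, ∃ x : X, (x, y) ∈ Γ)
    (p : Y → ℝ) (hp : ∀ y : Y, p y = sInf {r : ℝ | ∃ x : X, (x, y) ∈ Γ ∧ ‖x‖ = r}) :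
    Continuous p := by
  haveI : CompleteSpace Γ := hΓ.completeSpace_coe
  -- projection onto Y
  set f : Γ →L[ℝ] Y := (ContinuousLinearMap.snd ℝ X Y).comp Γ.subtypeL with hf
  have hsurj : Function.Surjective f := by
    intro y
    obtain ⟨x, hx⟩ := hran y
    exact ⟨⟨(x, y), hx⟩, rfl⟩
  obtain ⟨C, hC, hCf⟩ := f.exists_preimage_norm_le hsurj
  -- basic facts about the sets
  have hbdd : ∀ y : Y, BddBelow {r : ℝ | ∃ x : X, (x, y) ∈ Γ ∧ ‖x‖ = r} := by
    intro y
    exact ⟨0, fun r ⟨x, _, hx⟩ => hx ▸ norm_nonneg x⟩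
  have hne : ∀ y : Y, ({r : ℝ | ∃ x : X, (x, y) ∈ Γ ∧ ‖x‖ = r}).Nonempty := by
    intro y
    obtain ⟨x, hx⟩ := hran y
    exact ⟨‖x‖, x, hx, rfl⟩
  have hle : ∀ (y : Y) (x : X), (x, y) ∈ Γ → p y ≤ ‖x‖ := by
    intro y x hx
    rw [hp y]
    exact csInf_le (hbdd y) ⟨x, hx, rfl⟩
  -- key Lipschitz-type estimate
  have key : ∀ y z : Y, p y ≤ p z + C * ‖y - z‖ := by
    intro y z
    refine le_of_forall_pos_le_add ?_
    intro ε hε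
    obtain ⟨r, ⟨x', hx', hx'n⟩, hr⟩ :
        ∃ r ∈ {r : ℝ | ∃ x : X, (x, z) ∈ Γ ∧ ‖x‖ = r}, r < sInf {r : ℝ | ∃ x : X, (x, z) ∈ Γ ∧ ‖x‖ = r} + ε :=
      Real.lt_sInf_add_pos (hne z) hε
    obtain ⟨g, hgf, hgn⟩ := hCf (y - z)
    have hg : ((g : X × Y).1, y - z) ∈ Γ := by
      have : (g : X × Y).2 = y - z := hgf
      have hmem := g.2
      rw [← this]
      exact hmem
    have hmem : (x' + (g : X × Y).1, y) ∈ Γ := by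
      have := Γ.add_mem hx' hg
      simpa using this
    calc p y ≤ ‖x' + (g : X × Y).1‖ := hle y _ hmem
      _ ≤ ‖x'‖ + ‖(g : X × Y).1‖ := norm_add_le _ _
      _ ≤ ‖x'‖ + ‖g‖ := by
          have h1 : ‖(g : X × Y).1‖ ≤ ‖(g : X × Y)‖ := norm_fst_le _
          have h2 : ‖(g : X × Y)‖ = ‖g‖ := rfl
          linarith
      _ ≤ ‖x'‖ + C * ‖y - z‖ := by linarith
      _ ≤ p z + C * ‖y - z‖ + ε := by
          rw [hp z] at *
          linarith [hx'n ▸ hr]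
  have hlip : LipschitzWith (Real.toNNReal C) p := by
    refine LipschitzWith.of_dist_le_mul fun y z => ?_
    rw [Real.dist_eq, dist_eq_norm, Real.coe_toNNReal C hC.le, abs_sub_le_iff]
    have h2 : ‖z - y‖ = ‖y - z‖ := norm_sub_rev _ _
    constructor
    · linarith [key y z]
    · have h3 := key z y
      rw [h2] at h3
      linarith
  exact hlip.continuous
end

section
/- Let X, Z, Y be Banach spaces and let Γ be a closed linear subspace of X × Z × Y such that the projection (x, z, y) ↦ (x, y) maps Γ onto X × Y. Define p : X × Y → ℝ by p(x, y) = inf{‖z‖ : (x, z, y) ∈ Γ}. Then p is countably subadditive: for every sequence ((xₙ, yₙ)) in X × Y such that ∑ₙ (xₙ, yₙ) converges in X × Y and ∑ₙ p(xₙ, yₙ) converges in ℝ, one has p(∑ₙ (xₙ, yₙ)) ≤ ∑ₙ p(xₙ, yₙ). -/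
open Filter Topology

/-- For a closed linear ternary relation `Γ ⊆ X × Z × Y` projecting onto `X × Y`,
the function `p(x, y) = inf {‖z‖ : (x, z, y) ∈ Γ}` is countably subadditive. -/
theorem ternary_seminorm_countably_subadditive
    {X Z Y : Type*} [NormedAddCommGroup X] [NormedSpace ℝ X] [CompleteSpace X]
    [NormedAddCommGroup Z] [NormedSpace ℝ Z] [CompleteSpace Z]
    [NormedAddCommGroup Y] [NormedSpace ℝ Y] [CompleteSpace Y]
    (Γ : Submodule ℝ (X × Z × Y)) (hΓ : IsClosed (Γ : Set (X × Z × Y)))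
    (hsurj : ∀ x : X, ∀ y : Y, ∃ z : Z, (x, z, y) ∈ Γ)
    (p : X × Y → ℝ)
    (hp : ∀ q : X × Y, p q = sInf {r : ℝ | ∃ z : Z, (q.1, z, q.2) ∈ Γ ∧ ‖z‖ = r})
    (q : ℕ → X × Y) (s : X × Y) (t : ℝ)
    (hs : Tendsto (fun n => ∑ i ∈ Finset.range n, q i) atTop (𝓝 s))
    (ht : Tendsto (fun n => ∑ i ∈ Finset.range n, p (q i)) atTop (𝓝 t)) :
    p s ≤ t := by
  have hbdd : ∀ q' : X × Y, BddBelow {r : ℝ | ∃ z : Z, (q'.1, z, q'.2) ∈ Γ ∧ ‖z‖ = r} := by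
    intro q'
    exact ⟨0, by rintro r ⟨z, _, rfl⟩; exact norm_nonneg z⟩
  have hne : ∀ q' : X × Y, {r : ℝ | ∃ z : Z, (q'.1, z, q'.2) ∈ Γ ∧ ‖z‖ = r}.Nonempty := by
    intro q'
    obtain ⟨z, hz⟩ := hsurj q'.1 q'.2
    exact ⟨‖z‖, z, hz, rfl⟩
  have hpnn : ∀ q' : X × Y, 0 ≤ p q' := by
    intro q'
    rw [hp]
    exact le_csInf (hne q') (by rintro r ⟨z, _, rfl⟩; exact norm_nonneg z)
  refine le_of_forall_pos_le_add ?_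
  intro ε hε
  -- choose near-optimal lifts
  have hchoose : ∀ n : ℕ, ∃ z : Z, ((q n).1, z, (q n).2) ∈ Γ ∧ ‖z‖ < p (q n) + ε / 2 / 2 ^ n := by
    intro n
    have hlt : sInf {r : ℝ | ∃ z : Z, ((q n).1, z, (q n).2) ∈ Γ ∧ ‖z‖ = r}
        < p (q n) + ε / 2 / 2 ^ n := by
      rw [← hp]
      have : (0:ℝ) < ε / 2 / 2 ^ n := by positivity
      linarith
    obtain ⟨r, ⟨z, hzΓ, rfl⟩, hr⟩ := exists_lt_of_csInf_lt (hne (q n)) hlt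
    exact ⟨z, hzΓ, hr⟩
  choose z hzΓ hznorm using hchoose
  -- summability facts
  have hgeo : HasSum (fun n : ℕ => ε / 2 / 2 ^ n) ε := hasSum_geometric_two' ε
  have hpsum : HasSum (fun n => p (q n)) t := by
    have hnn : ∀ n, 0 ≤ p (q n) := fun n => hpnn (q n)
    exact (hasSum_iff_tendsto_nat_of_nonneg hnn t).2 ht
  have hznsum : Summable (fun n => ‖z n‖) := by
    refine Summable.of_nonneg_of_le (fun n => norm_nonneg _) (fun n => (hznorm n).le)
      (hpsum.summable.add hgeo.summable)
  have hzsum : Summable z := hznsum.of_norm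
  set w := ∑' n, z n with hw
  -- the triple sequence of partial sums lies in Γ and tends to (s.1, w, s.2)
  have htriple : Tendsto (fun n => ∑ i ∈ Finset.range n, ((q i).1, z i, (q i).2))
      atTop (𝓝 (s.1, w, s.2)) := by
    have h1 : Tendsto (fun n => ∑ i ∈ Finset.range n, (q i).1) atTop (𝓝 s.1) := by
      have := (continuous_fst.tendsto s).comp hs
      simpa [Function.comp_def, Prod.fst_sum] using this
    have h3 : Tendsto (fun n => ∑ i ∈ Finset.range n, (q i).2) atTop (𝓝 s.2) := by
      have := (continuous_snd.tendsto s).comp hs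
      simpa [Function.comp_def, Prod.snd_sum] using this
    have h2 : Tendsto (fun n => ∑ i ∈ Finset.range n, z i) atTop (𝓝 w) :=
      hzsum.hasSum.tendsto_sum_nat
    have := h1.prodMk_nhds (h2.prodMk_nhds h3)
    convert this using 2 with n
    rw [Prod.ext_iff, Prod.ext_iff]
    simp [Prod.fst_sum, Prod.snd_sum]
  have hmem : (s.1, w, s.2) ∈ Γ := by
    refine hΓ.mem_of_tendsto htriple (Eventually.of_forall fun n => ?_)
    exact Submodule.sum_mem Γ fun i _ => hzΓ i
  -- norm estimate
  have hwle : ‖w‖ ≤ t + ε := by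
    calc ‖w‖ ≤ ∑' n, ‖z n‖ := norm_tsum_le_tsum_norm hznsum
    _ ≤ ∑' n, (p (q n) + ε / 2 / 2 ^ n) := by
        refine Summable.tsum_le_tsum (fun n => (hznorm n).le) hznsum (hpsum.summable.add hgeo.summable)
    _ = t + ε := (hpsum.add hgeo).tsum_eq
  rw [hp]
  exact le_trans (csInf_le (hbdd s) ⟨w, hmem, rfl⟩) hwle
end

section
/- Let X, Z, Y be Banach spaces and let Γ be a closed linear subspace of X × Z × Y such that the projection (x, z, y) ↦ (x, y) maps Γ onto X × Y. Then the function p : X × Y → ℝ defined by p(x, y) = inf{‖z‖ : (x, z, y) ∈ Γ} is continuous on X × Y. -/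
/-- For a closed linear ternary relation `Γ ⊆ X × Z × Y` projecting onto `X × Y`,
the function `p(x, y) = inf {‖z‖ : (x, z, y) ∈ Γ}` is continuous on `X × Y`. -/
theorem ternary_seminorm_continuous
    {X Z Y : Type*} [NormedAddCommGroup X] [NormedSpace ℝ X] [CompleteSpace X]
    [NormedAddCommGroup Z] [NormedSpace ℝ Z] [CompleteSpace Z]
    [NormedAddCommGroup Y] [NormedSpace ℝ Y] [CompleteSpace Y]
    (Γ : Submodule ℝ (X × Z × Y)) (hΓ : IsClosed (Γ : Set (X × Z × Y)))
    (hsurj : ∀ x : X, ∀ y : Y, ∃ z : Z, (x, z, y) ∈ Γ)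
    (p : X × Y → ℝ)
    (hp : ∀ q : X × Y, p q = sInf {r : ℝ | ∃ z : Z, (q.1, z, q.2) ∈ Γ ∧ ‖z‖ = r}) :
    Continuous p := by
  set π : (X × Z × Y) →L[ℝ] X × Y :=
    (ContinuousLinearMap.fst ℝ X (Z × Y)).prod
      ((ContinuousLinearMap.snd ℝ Z Y).comp (ContinuousLinearMap.snd ℝ X (Z × Y))) with hπ
  haveI : CompleteSpace Γ := hΓ.completeSpace_coe
  set f : Γ →L[ℝ] X × Y := π.comp Γ.subtypeL with hf
  have hfsurj : Function.Surjective f := by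
    rintro ⟨x, y⟩
    obtain ⟨z, hz⟩ := hsurj x y
    exact ⟨⟨(x, z, y), hz⟩, rfl⟩
  obtain ⟨C, hC0, hCex⟩ := f.exists_preimage_norm_le hfsurj
  have hne : ∀ q : X × Y, {r : ℝ | ∃ z, (q.1, z, q.2) ∈ Γ ∧ ‖z‖ = r}.Nonempty := fun q => by
    obtain ⟨z, hz⟩ := hsurj q.1 q.2
    exact ⟨‖z‖, z, hz, rfl⟩
  have hbdd : ∀ q : X × Y, BddBelow {r : ℝ | ∃ z, (q.1, z, q.2) ∈ Γ ∧ ‖z‖ = r} :=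
    fun q => ⟨0, by rintro r ⟨z, _, rfl⟩; exact norm_nonneg z⟩
  have hle : ∀ (q : X × Y) (z : Z), (q.1, z, q.2) ∈ Γ → p q ≤ ‖z‖ := fun q z hz => by
    rw [hp]; exact csInf_le (hbdd q) ⟨z, hz, rfl⟩
  have key : ∀ q q' : X × Y, p q ≤ p q' + C * ‖q - q'‖ := by
    intro q q'
    apply le_of_forall_pos_le_add
    intro ε hε
    obtain ⟨r, hrmem, hr⟩ :
        ∃ r ∈ {r : ℝ | ∃ z, (q'.1, z, q'.2) ∈ Γ ∧ ‖z‖ = r}, r < p q' + ε := by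
      apply exists_lt_of_csInf_lt (hne q')
      rw [← hp]; linarith
    obtain ⟨z', hz', rfl⟩ := hrmem
    obtain ⟨γ, hγeq, hγnorm⟩ := hCex (q - q')
    have hγ1 : (γ : X × Z × Y).1 = q.1 - q'.1 := congrArg Prod.fst hγeq
    have hγ2 : (γ : X × Z × Y).2.2 = q.2 - q'.2 := congrArg Prod.snd hγeq
    have hsum : ((γ : X × Z × Y) + (q'.1, z', q'.2)) ∈ Γ := Γ.add_mem γ.2 hz'
    have hrepr : ((γ : X × Z × Y) + (q'.1, z', q'.2)) =
        (q.1, (γ : X × Z × Y).2.1 + z', q.2) := by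
      ext <;> simp [hγ1, hγ2]
    rw [hrepr] at hsum
    have h1 : p q ≤ ‖(γ : X × Z × Y).2.1 + z'‖ := hle q _ hsum
    have h2 : ‖(γ : X × Z × Y).2.1 + z'‖ ≤ ‖(γ : X × Z × Y).2.1‖ + ‖z'‖ := norm_add_le _ _
    have h3 : ‖(γ : X × Z × Y).2.1‖ ≤ ‖γ‖ :=
      le_trans (norm_fst_le _) (norm_snd_le (γ : X × Z × Y))
    have h4 : C * ‖q - q'‖ ≥ 0 := mul_nonneg hC0.le (norm_nonneg _)
    linarith
  apply LipschitzWith.continuous (K := Real.toNNReal C)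
  apply LipschitzWith.of_dist_le_mul
  intro q q'
  rw [Real.dist_eq, dist_eq_norm, Real.coe_toNNReal C hC0.le]
  have h1 := key q q'
  have h2 := key q' q
  rw [norm_sub_rev] at h2
  rw [abs_le]
  constructor <;> linarith
end
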